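/- arXiv:1406.3777 — 2 statements merged into one kernel-verified Lean document; each statement's English description precedes it below -/
import Mathlib

section
/- Let g be a finite-dimensional complex Lie algebra, x, a ∈ g*, and let h = g_y be the stabilizer of y = x − λ₀ a for some λ₀ ∈ ℂ. Suppose λ: U → ℂ is an analytic function on a neighborhood U of x with λ(x) = λ₀, such that g_{z − λ(z)a} has constant dimension on U and there exist analytic maps ξ, η: U → g with ξ(z), η(z) ∈ g_{z − λ(z)a} for all z ∈ U. Then for ξ₀ = ξ(x), η₀ = η(x) ∈ h, one has [ξ₀, η₀] = ⟨a, [ξ₀, η₀]⟩ · dλ(x), where dλ(x) ∈ g is the differential of λ at x viewed as an element of g ≅ (g*)*. -/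
open Module

/-- The coadjoint stabilizer `g_y = {ξ ∈ g ∣ ⟨y, [ξ, ·]⟩ = 0}` of `y ∈ g*`, as a
submodule of `g`. The Lie algebra structure on the normed space `g` is given by the
bilinear bracket `B`, and the dual `g*` is realised as the continuous dual
`g →L[ℂ] ℂ` (which coincides with the algebraic dual, `g` being finite-dimensional). -/
def stabSubmodule {g : Type*} [NormedAddCommGroup g] [NormedSpace ℂ g]
    (B : g →ₗ[ℂ] g →ₗ[ℂ] g) (y : g →L[ℂ] ℂ) : Submodule ℂ g where
  carrier := {ξ | ∀ w : g, y (B ξ w) = 0}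
  add_mem' := by
    intro a b ha hb w
    have ha' : ∀ w : g, y (B a w) = 0 := ha
    have hb' : ∀ w : g, y (B b w) = 0 := hb
    simp [ha' w, hb' w]
  zero_mem' := by intro w; simp
  smul_mem' := by
    intro t a ha w
    have ha' : ∀ w : g, y (B a w) = 0 := ha
    simp [ha' w]

open Filter Topology

theorem HasFDerivAt.apply_add_apply_eq_zero_of_eventually_eq_zero
    {𝕜 E F G : Type*} [NontriviallyNormedField 𝕜]
    [NormedAddCommGroup E] [NormedSpace 𝕜 E] [NormedAddCommGroup F] [NormedSpace 𝕜 F]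
    [NormedAddCommGroup G] [NormedSpace 𝕜 G]
    {φ : E → F →L[𝕜] G} {w : E → F} {φ' : E →L[𝕜] F →L[𝕜] G} {w' : E →L[𝕜] F} {x : E}
    (hφ : HasFDerivAt φ φ' x) (hw : HasFDerivAt w w' x)
    (h : ∀ᶠ z in 𝓝 x, φ z (w z) = 0) (v : E) :
    φ x (w' v) + φ' v (w x) = 0 := by
  have h0 : HasFDerivAt (fun z => φ z (w z)) (0 : E →L[𝕜] G) x :=
    (hasFDerivAt_const 0 x).congr_of_eventuallyEq h
  simpa using congrArg (· v) ((hφ.clm_apply hw).unique h0)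

section Stabilizer

variable {g : Type*} [NormedAddCommGroup g] [NormedSpace ℂ g] {B : g →ₗ[ℂ] g →ₗ[ℂ] g}

theorem mem_stabSubmodule {y : g →L[ℂ] ℂ} {ξ : g} :
    ξ ∈ stabSubmodule B y ↔ ∀ w, y (B ξ w) = 0 :=
  Iff.rfl

theorem apply_bracket_eq_zero_of_mem_stabSubmodule_right (hB : B.IsAlt) {y : g →L[ℂ] ℂ} {η : g}
    (hη : η ∈ stabSubmodule B y) (u : g) : y (B u η) = 0 := by
  rw [← hB.neg, map_neg, mem_stabSubmodule.mp hη u, neg_zero]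

/-- Differentiate `⟨μ z, [ξ z, η z]⟩ = 0` at `x`: the terms involving `ξ'` and `η'` vanish
because `ξ x, η x ∈ g_{μ x}`. -/
theorem HasFDerivAt.apply_bracket_eq_zero_of_mem_stabSubmodule [FiniteDimensional ℂ g]
    {E : Type*} [NormedAddCommGroup E] [NormedSpace ℂ E] (hB : B.IsAlt)
    {μ : E → g →L[ℂ] ℂ} {μ' : E →L[ℂ] g →L[ℂ] ℂ} {x : E} (hμ : HasFDerivAt μ μ' x)
    {ξ η : E → g} (hξ : DifferentiableAt ℂ ξ x) (hη : DifferentiableAt ℂ η x)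
    (hξs : ∀ᶠ z in 𝓝 x, ξ z ∈ stabSubmodule B (μ z)) (hηs : η x ∈ stabSubmodule B (μ x))
    (v : E) : μ' v (B (ξ x) (η x)) = 0 := by
  have hbracket := B.toContinuousBilinearMap.hasFDerivAt_of_bilinear
    hξ.hasFDerivAt hη.hasFDerivAt
  have h := hμ.apply_add_apply_eq_zero_of_eventually_eq_zero hbracket
    (hξs.mono fun z hz => mem_stabSubmodule.mp hz (η z)) v
  simpa [mem_stabSubmodule.mp hξs.self_of_nhds,
    apply_bracket_eq_zero_of_mem_stabSubmodule_right hB hηs] using h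

end Stabilizer

theorem stmt18_general {g : Type*} [NormedAddCommGroup g] [NormedSpace ℂ g]
    [FiniteDimensional ℂ g]
    (B : g →ₗ[ℂ] g →ₗ[ℂ] g)
    (hBskew : ∀ v, B v v = 0)
    (x a : g →L[ℂ] ℂ) (lam : (g →L[ℂ] ℂ) → ℂ)
    (hlam : AnalyticAt ℂ lam x)
    (ξ η : (g →L[ℂ] ℂ) → g)
    (hξan : AnalyticAt ℂ ξ x) (hηan : AnalyticAt ℂ η x)
    (hξ : ∀ᶠ z in nhds x, ξ z ∈ stabSubmodule B (z - lam z • a))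
    (hη : ∀ᶠ z in nhds x, η z ∈ stabSubmodule B (z - lam z • a)) :
    ∀ Dl : g, (∀ v : g →L[ℂ] ℂ, fderiv ℂ lam x v = v Dl) →
      B (ξ x) (η x) = (a (B (ξ x) (η x))) • Dl := by
  intro Dl hDl
  have hμ : HasFDerivAt (fun z => z - lam z • a)
      (ContinuousLinearMap.id ℂ _ - (fderiv ℂ lam x).smulRight a) x :=
    (hasFDerivAt_id x).sub (hlam.differentiableAt.hasFDerivAt.smul_const a)
  rw [← sub_eq_zero]
  refine SeparatingDual.eq_zero_of_forall_dual_eq_zero (R := ℂ) fun v => ?_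
  have h := hμ.apply_bracket_eq_zero_of_mem_stabSubmodule hBskew hξan.differentiableAt
    hηan.differentiableAt hξ hη.self_of_nhds v
  simpa [hDl, mul_comm] using h

/-- If `λ` is analytic near `x` with `λ(x) = λ₀`, the stabilizers `g_{z - λ(z)a}` have
constant dimension near `x`, and `ξ, η` are analytic local sections of these
stabilizers, then `[ξ₀, η₀] = ⟨a, [ξ₀, η₀]⟩ · dλ(x)` for `ξ₀ = ξ(x)`, `η₀ = η(x)`,
where `dλ(x)` is the differential of `λ` at `x`, viewed as an element of `g ≅ (g*)*`. -/
theorem stmt18 {g : Type*} [NormedAddCommGroup g] [NormedSpace ℂ g]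
    [FiniteDimensional ℂ g]
    (B : g →ₗ[ℂ] g →ₗ[ℂ] g)
    (hBskew : ∀ v, B v v = 0)
    (hBjac : ∀ u v w, B u (B v w) = B (B u v) w + B v (B u w))
    (x a : g →L[ℂ] ℂ) (l0 : ℂ) (lam : (g →L[ℂ] ℂ) → ℂ)
    (hl0 : lam x = l0) (hlam : AnalyticAt ℂ lam x)
    (hdim : ∀ᶠ z in nhds x,
      finrank ℂ ↥(stabSubmodule B (z - lam z • a)) =
        finrank ℂ ↥(stabSubmodule B (x - l0 • a)))
    (ξ η : (g →L[ℂ] ℂ) → g)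
    (hξan : AnalyticAt ℂ ξ x) (hηan : AnalyticAt ℂ η x)
    (hξ : ∀ᶠ z in nhds x, ξ z ∈ stabSubmodule B (z - lam z • a))
    (hη : ∀ᶠ z in nhds x, η z ∈ stabSubmodule B (z - lam z • a)) :
    ∀ Dl : g, (∀ v : g →L[ℂ] ℂ, fderiv ℂ lam x v = v Dl) →
      B (ξ x) (η x) = (a (B (ξ x) (η x))) • Dl :=
  stmt18_general B hBskew x a lam hlam ξ η hξan hηan hξ hη
end

section
/- Let λ₁,…,λ_d be (locally defined, analytic) functions on an open subset of a finite-dimensional complex vector space, and let p₁,…,p_n be functions such that Σ_{i=0}^{n} p_i(x) t^i = c · Π_{j=1}^{d} (1 + λ_j(x) t)^{s_j} identically in t, where c ≠ 0 is a constant, p₀ = c, and s_j ≥ 1 are integers with Σ s_j = n. If at a point x₀ the values λ₁(x₀),…,λ_d(x₀) are pairwise distinct, then the linear span of the differentials dλ₁(x₀),…,dλ_d(x₀) equals the linear span of dp₁(x₀),…,dp_n(x₀). -/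
/-!
Differentiating the identity `Σᵢ pᵢ tⁱ = c ∏ⱼ (1 + λⱼ t)^{sⱼ}` at `x₀` gives, for every `t`,
`Σᵢ tⁱ dpᵢ = Σⱼ c Dⱼ(t) dλⱼ`, where `Dⱼ = ∂/∂λⱼ ∏ₖ (1 + λₖ t)^{sₖ}` taken at `λ(x₀)`.
When a family of scalar functions `Gⱼ` is linearly independent, the vectors `Σⱼ Gⱼ(t) wⱼ`
span exactly the span of the `wⱼ`. The monomials `tⁱ` are independent, and so are the
`Dⱼ`: up to the common factor `t ∏ₖ (1 + λₖ t)^{sₖ - 1}` and the scalars `sⱼ`, they are the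
polynomials `∏_{k ≠ j} (1 + λₖ t)`, which are independent because the `λₖ(x₀)` are distinct.
-/

open Polynomial

theorem Submodule.span_range_swap_eq_top_of_linearIndependent {ι T K : Type*} [Fintype ι]
    [Field K] {G : ι → T → K} (hG : LinearIndependent K G) :
    Submodule.span K (Set.range (Function.swap G)) = ⊤ := by
  classical
  rw [← Submodule.dualAnnihilator_eq_bot_iff, Submodule.eq_bot_iff]
  intro φ hφ
  rw [Submodule.mem_dualAnnihilator] at hφ
  have hbasis : ∀ j, φ (fun k => if j = k then 1 else 0) = 0 := by
    refine Fintype.linearIndependent_iff.1 hG _ (funext fun t => ?_)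
    have := hφ _ (Submodule.subset_span ⟨t, rfl⟩)
    simpa [LinearMap.pi_apply_eq_sum_univ φ (fun j => G j t), eq_comm, mul_comm] using this
  refine LinearMap.ext fun v => ?_
  simp [LinearMap.pi_apply_eq_sum_univ φ v, hbasis]

theorem Submodule.span_range_sum_smul_eq_of_linearIndependent {ι T K M : Type*} [Fintype ι]
    [Field K] [AddCommGroup M] [Module K M] {G : ι → T → K} (hG : LinearIndependent K G)
    (w : ι → M) :
    Submodule.span K (Set.range fun t => ∑ j, G j t • w j) = Submodule.span K (Set.range w) := by
  have hcurve : (fun t => ∑ j, G j t • w j) =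
      Fintype.linearCombination K w ∘ Function.swap G := by
    ext t; simp [Fintype.linearCombination_apply]
  rw [hcurve, Set.range_comp, Submodule.span_image, span_range_swap_eq_top_of_linearIndependent hG,
    Submodule.map_top, Fintype.range_linearCombination]

theorem LinearIndependent.polynomial_eval {ι R : Type*} [CommRing R] [IsDomain R] [Infinite R]
    {P : ι → R[X]} (hP : LinearIndependent R P) : LinearIndependent R fun i t => (P i).eval t :=
  hP.map' (LinearMap.pi fun t => Polynomial.leval t) <|
    LinearMap.ker_eq_bot.2 fun _ _ h => Polynomial.funext fun t => congr_fun h t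

theorem Polynomial.linearIndependent_X_pow_succ (R : Type*) [Semiring R] (n : ℕ) :
    LinearIndependent R fun i : Fin n => (X : R[X]) ^ ((i : ℕ) + 1) := by
  have := (basisMonomials R).linearIndependent.comp (fun i : Fin n => (i : ℕ) + 1)
    fun a b h => Fin.ext (by simpa using h)
  simpa [Function.comp_def, X_pow_eq_monomial] using this

theorem linearIndependent_pow_succ (R : Type*) [CommRing R] [IsDomain R] [Infinite R] (n : ℕ) :
    LinearIndependent R fun (i : Fin n) (t : R) => t ^ ((i : ℕ) + 1) := by
  simpa using (linearIndependent_X_pow_succ R n).polynomial_eval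

theorem LinearIndependent.mul_left {ι R A : Type*} [CommRing R] [Ring A] [IsDomain A] [Algebra R A]
    {P : ι → A} (hP : LinearIndependent R P) {H : A} (hH : H ≠ 0) :
    LinearIndependent R fun i => H * P i :=
  hP.map' (LinearMap.mulLeft R H) <|
    LinearMap.ker_eq_bot.2 fun _ _ h => mul_left_cancel₀ hH h

namespace Polynomial

variable {ι K : Type*} [Fintype ι] [DecidableEq ι] [Field K]

theorem one_add_C_mul_X_ne_zero {R : Type*} [Semiring R] [Nontrivial R] (a : R) :
    1 + C a * X ≠ 0 := fun h => by
  simpa using congr_arg (eval 0) h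

theorem linearIndependent_prod_erase_one_add_C_mul_X {μ : ι → K} (hμ : Function.Injective μ) :
    LinearIndependent K fun j => ∏ k ∈ Finset.univ.erase j, (1 + C (μ k) * X) := by
  rw [Fintype.linearIndependent_iff]
  intro α hα
  have heval : ∀ t, ∑ j, α j * ∏ k ∈ Finset.univ.erase j, (1 + μ k * t) = 0 := fun t => by
    simpa [eval_finsetSum, eval_prod] using congr_arg (eval t) hα
  -- Evaluating at the root `-(μ j)⁻¹` of the `j`-th factor kills every summand but the `j`-th.
  have hnonzero : ∀ j, μ j ≠ 0 → α j = 0 := by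
    intro j hj
    have h := heval (-(μ j)⁻¹)
    rw [Finset.sum_eq_single j (fun k _ hkj => mul_eq_zero_of_right _ <|
      Finset.prod_eq_zero (Finset.mem_erase.2 ⟨Ne.symm hkj, Finset.mem_univ j⟩)
        (by field_simp; ring)) (by simp)] at h
    refine (mul_eq_zero.1 h).resolve_right (Finset.prod_ne_zero_iff.2 fun k hk hzero => ?_)
    refine (Finset.mem_erase.1 hk).1 (hμ ?_)
    field_simp at hzero
    linear_combination -hzero
  intro j
  by_cases hj : μ j = 0
  · have h := heval 0
    rw [Finset.sum_eq_single j (fun k _ hkj => by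
      rw [hnonzero k fun h0 => hkj (hμ (h0.trans hj.symm)), zero_mul]) (by simp)] at h
    simpa using h
  · exact hnonzero j hj

/-- `∂/∂μⱼ` of `∏ₖ (1 + μₖ X) ^ sₖ`. -/
noncomputable def partialDerivProd (μ : ι → K) (s : ι → ℕ) (j : ι) : K[X] :=
  (∏ k ∈ Finset.univ.erase j, (1 + C (μ k) * X) ^ s k) *
    (C (s j : K) * (1 + C (μ j) * X) ^ (s j - 1) * X)

theorem linearIndependent_partialDerivProd {μ : ι → K} (hμ : Function.Injective μ) {s : ι → ℕ}
    (hs : ∀ j, (s j : K) ≠ 0) : LinearIndependent K (partialDerivProd μ s) := by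
  set H : K[X] := X * ∏ k, (1 + C (μ k) * X) ^ (s k - 1)
  have hH : H ≠ 0 := mul_ne_zero X_ne_zero <|
    Finset.prod_ne_zero_iff.2 fun k _ => pow_ne_zero _ (one_add_C_mul_X_ne_zero _)
  have hfactor : partialDerivProd μ s = fun j => Units.mk0 (s j : K) (hs j) •
      (H * ∏ k ∈ Finset.univ.erase j, (1 + C (μ k) * X)) := by
    ext1 j
    have hsplit : ∏ k ∈ Finset.univ.erase j, (1 + C (μ k) * X) ^ s k =
        (∏ k ∈ Finset.univ.erase j, (1 + C (μ k) * X) ^ (s k - 1)) *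
          ∏ k ∈ Finset.univ.erase j, (1 + C (μ k) * X) := by
      rw [← Finset.prod_mul_distrib]
      refine Finset.prod_congr rfl fun k _ => ?_
      rw [← pow_succ, Nat.sub_add_cancel (Nat.pos_of_ne_zero fun h => hs k (by simp [h]))]
    rw [Units.smul_def, Units.val_mk0, smul_eq_C_mul, partialDerivProd, hsplit]
    simp only [H]
    rw [← Finset.mul_prod_erase Finset.univ (fun k => (1 + C (μ k) * X) ^ (s k - 1))
        (Finset.mem_univ j)]
    ring
  rw [hfactor]
  exact ((linearIndependent_prod_erase_one_add_C_mul_X hμ).mul_left hH).units_smul _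

end Polynomial

section Derivative

variable {𝕜 E : Type*} [NontriviallyNormedField 𝕜] [NormedAddCommGroup E] [NormedSpace 𝕜 E]

theorem hasFDerivAt_prod_one_add_mul_pow {ι : Type*} [Fintype ι] [DecidableEq ι]
    {f : ι → E → 𝕜} {x : E} (hf : ∀ j, DifferentiableAt 𝕜 (f j) x) (s : ι → ℕ) (t : 𝕜) :
    HasFDerivAt (fun y => ∏ j, (1 + f j y * t) ^ s j)
      (∑ j, (partialDerivProd (fun k => f k x) s j).eval t • fderiv 𝕜 (f j) x) x := by
  have hfactor : ∀ j ∈ Finset.univ, HasFDerivAt (fun y => (1 + f j y * t) ^ s j)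
      (((s j : 𝕜) * (1 + f j x * t) ^ (s j - 1) * t) • fderiv 𝕜 (f j) x) x := fun j _ => by
    have h := (((hasDerivAt_id (f j x)).mul_const t).const_add 1).pow (s j)
    simp only [id, one_mul] at h
    exact h.comp_hasFDerivAt x (hf j).hasFDerivAt
  refine (HasFDerivAt.finsetProd hfactor).congr_fderiv (Finset.sum_congr rfl fun j _ => ?_)
  simp [partialDerivProd, eval_prod, smul_smul]

theorem sum_pow_smul_fderiv_eq {n d : ℕ} {p : Fin (n + 1) → E → 𝕜} {lam : Fin d → E → 𝕜}
    {s : Fin d → ℕ} {c : 𝕜} {U : Set E} {x0 : E} (hU : U ∈ nhds x0)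
    (hp0 : ∀ x ∈ U, p 0 x = c) (hp : ∀ i, DifferentiableAt 𝕜 (p i) x0)
    (hlam : ∀ j, DifferentiableAt 𝕜 (lam j) x0)
    (hid : ∀ x ∈ U, ∀ t : 𝕜,
      ∑ i : Fin (n + 1), p i x * t ^ (i : ℕ) = c * ∏ j, (1 + lam j x * t) ^ s j) (t : 𝕜) :
    ∑ i : Fin n, t ^ ((i : ℕ) + 1) • fderiv 𝕜 (p i.succ) x0 =
      ∑ j, (C c * partialDerivProd (fun k => lam k x0) s j).eval t • fderiv 𝕜 (lam j) x0 := by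
  have hdp0 : fderiv 𝕜 (p 0) x0 = 0 := by
    rw [(Filter.eventuallyEq_of_mem hU hp0).fderiv_eq, fderiv_const_apply]
  have hlhs : HasFDerivAt (fun x => ∑ i : Fin (n + 1), p i x * t ^ (i : ℕ))
      (∑ i : Fin (n + 1), t ^ (i : ℕ) • fderiv 𝕜 (p i) x0) x0 :=
    HasFDerivAt.fun_sum fun i _ => (hp i).hasFDerivAt.mul_const _
  have hrhs := ((hasFDerivAt_prod_one_add_mul_pow hlam s t).const_mul c).congr_of_eventuallyEq
    (Filter.eventuallyEq_of_mem hU fun x hx => hid x hx t)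
  have h := hlhs.unique hrhs
  rw [Fin.sum_univ_succ, hdp0] at h
  simpa [Finset.smul_sum, smul_smul] using h

end Derivative

theorem stmt19_general {E : Type*} [NormedAddCommGroup E] [NormedSpace ℂ E]
    (U : Set E) (hU : IsOpen U) (x0 : E) (hx0 : x0 ∈ U)
    (d n : ℕ) (lam : Fin d → E → ℂ) (p : Fin (n + 1) → E → ℂ)
    (c : ℂ) (hc : c ≠ 0)
    (s : Fin d → ℕ) (hs : ∀ j, 1 ≤ s j)
    (hp0 : ∀ x ∈ U, p 0 x = c)
    (hlam_an : ∀ j, AnalyticAt ℂ (lam j) x0)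
    (hp_an : ∀ i, AnalyticAt ℂ (p i) x0)
    (hid : ∀ x ∈ U, ∀ t : ℂ,
      ∑ i : Fin (n + 1), p i x * t ^ (i : ℕ) = c * ∏ j, (1 + lam j x * t) ^ s j)
    (hdist : Function.Injective fun j => lam j x0) :
    Submodule.span ℂ (Set.range fun j => fderiv ℂ (lam j) x0) =
      Submodule.span ℂ (Set.range fun i : Fin n => fderiv ℂ (p i.succ) x0) := by
  have hcurve := sum_pow_smul_fderiv_eq (hU.mem_nhds hx0) hp0
    (fun i => (hp_an i).differentiableAt) (fun j => (hlam_an j).differentiableAt) hid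
  have hs' : ∀ j, (s j : ℂ) ≠ 0 := fun j => Nat.cast_ne_zero.2 (Nat.one_le_iff_ne_zero.1 (hs j))
  have hD : LinearIndependent ℂ fun j t =>
      (C c * partialDerivProd (fun k => lam k x0) s j).eval t :=
    ((linearIndependent_partialDerivProd hdist hs').mul_left (C_ne_zero.2 hc)).polynomial_eval
  rw [← Submodule.span_range_sum_smul_eq_of_linearIndependent hD,
    ← Submodule.span_range_sum_smul_eq_of_linearIndependent (linearIndependent_pow_succ ℂ n),
    funext hcurve]

/-- If `Σ_{i=0}^{n} pᵢ(x) tⁱ = c · Π_{j=1}^{d} (1 + λⱼ(x) t)^{sⱼ}` identically in `t` on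
an open set `U` (with `c ≠ 0`, `p₀ = c`, `sⱼ ≥ 1`, `Σ sⱼ = n`), and the values
`λ₁(x₀),…,λ_d(x₀)` are pairwise distinct, then the span of the differentials
`dλ₁(x₀),…,dλ_d(x₀)` equals the span of `dp₁(x₀),…,dp_n(x₀)`. -/
theorem stmt19 {E : Type*} [NormedAddCommGroup E] [NormedSpace ℂ E]
    [FiniteDimensional ℂ E]
    (U : Set E) (hU : IsOpen U) (x0 : E) (hx0 : x0 ∈ U)
    (d n : ℕ) (lam : Fin d → E → ℂ) (p : Fin (n + 1) → E → ℂ)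
    (c : ℂ) (hc : c ≠ 0)
    (s : Fin d → ℕ) (hs : ∀ j, 1 ≤ s j) (hsum : ∑ j, s j = n)
    (hp0 : ∀ x ∈ U, p 0 x = c)
    (hlam_an : ∀ j, AnalyticAt ℂ (lam j) x0)
    (hp_an : ∀ i, AnalyticAt ℂ (p i) x0)
    (hid : ∀ x ∈ U, ∀ t : ℂ,
      ∑ i : Fin (n + 1), p i x * t ^ (i : ℕ) = c * ∏ j, (1 + lam j x * t) ^ s j)
    (hdist : Function.Injective fun j => lam j x0) :
    Submodule.span ℂ (Set.range fun j => fderiv ℂ (lam j) x0) =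
      Submodule.span ℂ (Set.range fun i : Fin n => fderiv ℂ (p i.succ) x0) :=
  stmt19_general U hU x0 hx0 d n lam p c hc s hs hp0 hlam_an hp_an hid hdist
end
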